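/- Let G be a group. In ν(G), the identity [[g, h^φ], [x, y^φ]] = [[g, h], [x, y]^φ] holds for all g, h, x, y ∈ G. -/
import Mathlib


namespace TensorNu

universe u

/-- The commutator `[x,y] = x⁻¹y⁻¹xy`. -/
def comm {K : Type*} [Group K] (x y : K) : K := x⁻¹ * y⁻¹ * x * y

/-- Conjugation `x^y = y⁻¹xy`. -/
def conj {K : Type*} [Group K] (x y : K) : K := y⁻¹ * x * y

variable (G : Type u) [Group G]

/-- The defining relators of `ν(G)`, as elements of the free group on `G ⊕ G`,
where `Sum.inl` corresponds to the canonical copy of `G` and `Sum.inr` to the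
isomorphic copy `G^φ` (`g ↦ g^φ`).  They comprise the multiplication tables of
`G` and of `G^φ`, together with the relations
`[g₁,g₂^φ]^{g₃} = [g₁^{g₃},(g₂^{g₃})^φ]` and `[g₁,g₂^φ]^{g₃} = [g₁,g₂^φ]^{g₃^φ}`. -/
def nuRels : Set (FreeGroup (G ⊕ G)) :=
  {r | (∃ g h : G, r = FreeGroup.of (Sum.inl g) * FreeGroup.of (Sum.inl h) *
          (FreeGroup.of (Sum.inl (g * h)))⁻¹)
     ∨ (∃ g h : G, r = FreeGroup.of (Sum.inr g) * FreeGroup.of (Sum.inr h) *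
          (FreeGroup.of (Sum.inr (g * h)))⁻¹)
     ∨ (∃ g₁ g₂ g₃ : G, r =
          conj (comm (FreeGroup.of (Sum.inl g₁)) (FreeGroup.of (Sum.inr g₂)))
              (FreeGroup.of (Sum.inl g₃)) *
            (comm (FreeGroup.of (Sum.inl (conj g₁ g₃)))
              (FreeGroup.of (Sum.inr (conj g₂ g₃))))⁻¹)
     ∨ (∃ g₁ g₂ g₃ : G, r =
          conj (comm (FreeGroup.of (Sum.inl g₁)) (FreeGroup.of (Sum.inr g₂)))
              (FreeGroup.of (Sum.inl g₃)) *
            (conj (comm (FreeGroup.of (Sum.inl g₁)) (FreeGroup.of (Sum.inr g₂)))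
              (FreeGroup.of (Sum.inr g₃)))⁻¹)}

/-- The group `ν(G)`. -/
abbrev Nu := PresentedGroup (nuRels G)

/-- The canonical image of `g ∈ G` in `ν(G)`. -/
def ι (g : G) : Nu G := PresentedGroup.of (Sum.inl g)

/-- The canonical image `g^φ` of `g ∈ G` (via the copy `G^φ`) in `ν(G)`. -/
def ιφ (g : G) : Nu G := PresentedGroup.of (Sum.inr g)

/-- The set `T⊗(G)` of tensors `[a, b^φ]`, `a, b ∈ G`. -/
def tensorSet : Set (Nu G) := {x | ∃ a b : G, x = comm (ι G a) (ιφ G b)}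

/-- The image of `G` in `ν(G)` as a subgroup. -/
def GSub : Subgroup (Nu G) := Subgroup.closure (Set.range (ι G))

/-- The image of `G^φ` in `ν(G)` as a subgroup. -/
def GφSub : Subgroup (Nu G) := Subgroup.closure (Set.range (ιφ G))

/-- The non-abelian tensor square `[G, G^φ] ≤ ν(G)`. -/
def tensorSquare : Subgroup (Nu G) := ⁅GSub G, GφSub G⁆

/-- `[S, x]`: the subgroup generated by the commutators `[s, x]`, `s ∈ S`. -/
def commSub {K : Type*} [Group K] (S : Set K) (x : K) : Subgroup K :=
  Subgroup.closure {c | ∃ s ∈ S, c = comm s x}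

end TensorNu

namespace TensorNu

/-! ### Pure group-theoretic lemmas -/
section Pure
variable {K : Type*} [Group K] (a b c d x y z p q w : K)

lemma conj_mul' : conj x (a*b) = conj (conj x a) b := by simp only [conj]; group
lemma mul_conj : conj (x*y) a = conj x a * conj y a := by simp only [conj]; group
lemma inv_conj : conj x⁻¹ a = (conj x a)⁻¹ := by simp only [conj]; group
lemma conj3 : conj (conj (conj x a) b) c = conj x (a*(b*c)) := by simp only [conj]; group
lemma conj4 : conj (conj (conj (conj x a) b) c) d = conj x (a*b*c*d) := by
  simp only [conj]; group
lemma comm_eq : comm x w = x⁻¹ * conj x w := by simp only [comm, conj]; group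
lemma comm_inv_right : comm x y⁻¹ = (conj (comm x y) y⁻¹)⁻¹ := by simp only [comm, conj]; group
lemma conj_comm_expand : conj x (comm p q) = conj (conj (conj (conj x p⁻¹) q⁻¹) p) q := by
  simp only [comm, conj]; group
lemma comm_expand4 : comm (comm p q) w =
    conj (comm p⁻¹ w) (q⁻¹*(p*q)) *
      (conj (comm q⁻¹ w) (p*q) * (conj (comm p w) q * comm q w)) := by
  simp only [comm, conj]; group
lemma conj_inv_self : conj b b⁻¹ = b := by simp only [conj]; group
end Pure

/-! ### The two copies of `G` in `ν(G)` and the defining relations -/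
variable {G : Type u} [Group G]

lemma rel_mk {r : FreeGroup (G ⊕ G)} (h : r ∈ nuRels G) :
    PresentedGroup.mk (nuRels G) r = 1 :=
  (QuotientGroup.eq_one_iff r).mpr (Subgroup.subset_normalClosure h)

lemma ι_mul (a b : G) : ι G (a*b) = ι G a * ι G b := by
  have h := rel_mk (Or.inl ⟨a, b, rfl⟩)
  rw [map_mul, map_mul, map_inv, mul_inv_eq_one] at h
  exact h.symm

lemma ιφ_mul (a b : G) : ιφ G (a*b) = ιφ G a * ιφ G b := by
  have h := rel_mk (Or.inr (Or.inl ⟨a, b, rfl⟩))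
  rw [map_mul, map_mul, map_inv, mul_inv_eq_one] at h
  exact h.symm

lemma ι_one : ι G 1 = 1 := by
  have h := ι_mul (G := G) 1 1
  rw [mul_one] at h
  exact (left_eq_mul.mp h)

lemma ιφ_one : ιφ G 1 = 1 := by
  have h := ιφ_mul (G := G) 1 1
  rw [mul_one] at h
  exact (left_eq_mul.mp h)

lemma ι_inv (a : G) : ι G a⁻¹ = (ι G a)⁻¹ := by
  refine eq_inv_of_mul_eq_one_left ?_
  rw [← ι_mul, inv_mul_cancel, ι_one]

lemma ιφ_inv (a : G) : ιφ G a⁻¹ = (ιφ G a)⁻¹ := by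
  refine eq_inv_of_mul_eq_one_left ?_
  rw [← ιφ_mul, inv_mul_cancel, ιφ_one]

lemma ι_comm (a b : G) : ι G (comm a b) = comm (ι G a) (ι G b) := by
  simp only [comm, ι_mul, ι_inv]

lemma ιφ_comm (a b : G) : ιφ G (comm a b) = comm (ιφ G a) (ιφ G b) := by
  simp only [comm, ιφ_mul, ιφ_inv]

lemma ιφ_conj (a b : G) : ιφ G (conj a b) = conj (ιφ G a) (ιφ G b) := by
  simp only [conj, ιφ_mul, ιφ_inv]

/-- Defining relation: `[g₁,g₂^φ]^{g₃} = [g₁^{g₃},(g₂^{g₃})^φ]`. -/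
lemma L1 (a b c : G) :
    conj (comm (ι G a) (ιφ G b)) (ι G c) =
      comm (ι G (conj a c)) (ιφ G (conj b c)) := by
  have h := rel_mk (Or.inr (Or.inr (Or.inl ⟨a, b, c, rfl⟩)))
  simp only [conj, comm, map_mul, map_inv, mul_inv_eq_one] at h
  exact h

/-- Defining relation: `[g₁,g₂^φ]^{g₃} = [g₁,g₂^φ]^{g₃^φ}`. -/
lemma R4 (a b c : G) :
    conj (comm (ι G a) (ιφ G b)) (ι G c) =
      conj (comm (ι G a) (ιφ G b)) (ιφ G c) := by
  have h := rel_mk (Or.inr (Or.inr (Or.inr ⟨a, b, c, rfl⟩)))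
  simp only [conj, comm, map_mul, map_inv, mul_inv_eq_one] at h
  exact h

/-- `[a,b^φ]^{c^φ} = [a^c,(b^c)^φ]`. -/
lemma L2 (a b c : G) :
    conj (comm (ι G a) (ιφ G b)) (ιφ G c) =
      comm (ι G (conj a c)) (ιφ G (conj b c)) := by
  rw [← R4]; exact L1 a b c

/-- Expansion of a tensor in its first argument. -/
lemma E1 (a b c : G) :
    comm (ι G (a*b)) (ιφ G c) =
      conj (comm (ι G a) (ιφ G c)) (ι G b) * comm (ι G b) (ιφ G c) := by
  rw [ι_mul]; simp only [comm, conj]; group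

/-- Expansion of a tensor in its second argument. -/
lemma E2 (a b c : G) :
    comm (ι G a) (ιφ G (b*c)) =
      comm (ι G a) (ιφ G c) * conj (comm (ι G a) (ιφ G b)) (ιφ G c) := by
  rw [ιφ_mul]; simp only [comm, conj]; group

/-- Tensor with inverted second argument. -/
lemma E2' (a b : G) :
    comm (ι G a) (ιφ G b⁻¹) = (comm (ι G (conj a b⁻¹)) (ιφ G b))⁻¹ := by
  have h1 : comm (ι G a) (ιφ G b⁻¹) = (conj (comm (ι G a) (ιφ G b)) (ιφ G b⁻¹))⁻¹ := by
    rw [ιφ_inv]; exact comm_inv_right _ _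
  rw [h1, L2, conj_inv_self]

lemma conj_ιφ_ι (q u : G) :
    conj (ιφ G q) (ι G u) = ιφ G q * (comm (ι G u) (ιφ G q))⁻¹ := by
  simp only [comm, conj]; group

/-- Collapsing the middle of the expansion. -/
lemma Mlem {a s r k : G} (hsr : s * r = k) :
    ιφ G r⁻¹ * (comm (ι G a) (ιφ G r⁻¹))⁻¹ *
      (comm (ι G a) (ιφ G s) * ιφ G r) = comm (ι G a) (ιφ G k) := by
  subst hsr
  have cis : conj r⁻¹ r = r⁻¹ := by simp only [conj]; group
  have ccl : conj (conj a r) r⁻¹ = a := by simp only [conj]; group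
  have hS : conj (comm (ι G a) (ιφ G r⁻¹)) (ιφ G r) = (comm (ι G a) (ιφ G r))⁻¹ := by
    rw [L2, cis, E2', ccl]
  have hE : comm (ι G a) (ιφ G (s*r)) =
      comm (ι G a) (ιφ G r) * conj (comm (ι G a) (ιφ G s)) (ιφ G r) := E2 a s r
  have hSS : comm (ι G a) (ιφ G r⁻¹) =
      ιφ G r * (comm (ι G a) (ιφ G r))⁻¹ * (ιφ G r)⁻¹ := by
    rw [← hS]; simp only [conj]; group
  rw [hE, hSS, ιφ_inv]; simp only [conj]; group

/-- The key identity: `[[u,v^φ],k^φ] = [[u,v],k^φ]` in `ν(G)`. -/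
lemma A0 (u v k : G) :
    comm (comm (ι G u) (ιφ G v)) (ιφ G k) = comm (ι G (comm u v)) (ιφ G k) := by
  have hq : conj (comm v⁻¹ k) v = (comm v k)⁻¹ := by simp only [comm, conj]; group
  have hm : comm u v = u⁻¹ * (v⁻¹*(u*v)) := by simp only [comm]; group
  have hcuv : v⁻¹*(u*v) = conj u v := by simp only [conj]; group
  have hsk : conj k v * comm v k = k := by simp only [conj, comm]; group
  have t1 : conj (comm (ι G u)⁻¹ (ιφ G k)) ((ιφ G v)⁻¹*(ι G u*ιφ G v)) =
      comm (ι G (conj u⁻¹ (v⁻¹*(u*v)))) (ιφ G (conj k (v⁻¹*(u*v)))) := by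
    rw [← ι_inv, ← ιφ_inv, conj_mul', conj_mul', L2, L1, L2, conj3, conj3]
  have t2 : conj (comm (ιφ G v)⁻¹ (ιφ G k)) (ι G u*ιφ G v) =
      ιφ G ((comm v k)⁻¹) * (comm (ι G (conj u v)) (ιφ G ((comm v k)⁻¹)))⁻¹ := by
    rw [← ιφ_inv, ← ιφ_comm, conj_mul', conj_ιφ_ι, mul_conj, inv_conj, ← ιφ_conj,
      L2, hq]
  have t3 : conj (comm (ι G u) (ιφ G k)) (ιφ G v) =
      comm (ι G (conj u v)) (ιφ G (conj k v)) := L2 u k v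
  have t4 : comm (ιφ G v) (ιφ G k) = ιφ G (comm v k) := (ιφ_comm v k).symm
  calc
    comm (comm (ι G u) (ιφ G v)) (ιφ G k)
        = conj (comm (ι G u)⁻¹ (ιφ G k)) ((ιφ G v)⁻¹*(ι G u*ιφ G v)) *
          (conj (comm (ιφ G v)⁻¹ (ιφ G k)) (ι G u*ιφ G v) *
           (conj (comm (ι G u) (ιφ G k)) (ιφ G v) * comm (ιφ G v) (ιφ G k))) :=
      comm_expand4 _ _ _
    _ = comm (ι G (conj u⁻¹ (v⁻¹*(u*v)))) (ιφ G (conj k (v⁻¹*(u*v)))) *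
          (ιφ G ((comm v k)⁻¹) * (comm (ι G (conj u v)) (ιφ G ((comm v k)⁻¹)))⁻¹ *
           (comm (ι G (conj u v)) (ιφ G (conj k v)) * ιφ G (comm v k))) := by
      rw [t1, t2, t3, t4]
    _ = comm (ι G (conj u⁻¹ (v⁻¹*(u*v)))) (ιφ G (conj k (v⁻¹*(u*v)))) *
          comm (ι G (conj u v)) (ιφ G k) := by rw [Mlem hsk]
    _ = comm (ι G (comm u v)) (ιφ G k) := by rw [hm, E1, L1, hcuv]

lemma lemA (u v k : G) :
    (comm (ι G u) (ιφ G v))⁻¹ * comm (ι G (conj u k)) (ιφ G (conj v k)) =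
      comm (ι G (comm u v)) (ιφ G k) :=
  calc (comm (ι G u) (ιφ G v))⁻¹ * comm (ι G (conj u k)) (ιφ G (conj v k))
      = (comm (ι G u) (ιφ G v))⁻¹ * conj (comm (ι G u) (ιφ G v)) (ιφ G k) := by
        rw [L2]
    _ = comm (comm (ι G u) (ιφ G v)) (ιφ G k) := (comm_eq _ _).symm
    _ = comm (ι G (comm u v)) (ιφ G k) := A0 u v k

/-- In `ν(G)`: `[[g, h^φ], [x, y^φ]] = [[g, h], [x, y]^φ]`. -/
theorem comm_tensor_tensor (G : Type u) [Group G] (g h x y : G) :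
    comm (comm (ι G g) (ιφ G h)) (comm (ι G x) (ιφ G y)) =
      comm (comm (ι G g) (ι G h)) (ιφ G (comm x y)) := by
  have hxy : x⁻¹*y⁻¹*x*y = comm x y := rfl
  have hc : conj (comm (ι G g) (ιφ G h)) (comm (ι G x) (ιφ G y)) =
      comm (ι G (conj g (comm x y))) (ιφ G (conj h (comm x y))) := by
    rw [conj_comm_expand, ← ι_inv, ← ιφ_inv, L1, L2, L1, L2, conj4, conj4, hxy]
  calc
    comm (comm (ι G g) (ιφ G h)) (comm (ι G x) (ιφ G y))
        = (comm (ι G g) (ιφ G h))⁻¹ *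
            conj (comm (ι G g) (ιφ G h)) (comm (ι G x) (ιφ G y)) := comm_eq _ _
    _ = (comm (ι G g) (ιφ G h))⁻¹ *
            comm (ι G (conj g (comm x y))) (ιφ G (conj h (comm x y))) := by rw [hc]
    _ = comm (ι G (comm g h)) (ιφ G (comm x y)) := lemA g h (comm x y)
    _ = comm (comm (ι G g) (ι G h)) (ιφ G (comm x y)) := by rw [ι_comm]

end TensorNu
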